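/- arXiv:2010.15353 — 6 statements merged into one kernel-verified Lean document; each statement's English description precedes it below -/
import Mathlib

section
/- Let X, V, Q be real inner product spaces, A : X →L[ℝ] X a continuous linear operator that is symmetric (⟪A σ, τ⟫ = ⟪σ, A τ⟫ for all σ, τ ∈ X) and positive semidefinite (0 ≤ ⟪A τ, τ⟫ for all τ ∈ X), and Dₑ : X →ₗ[ℝ] V, S : X →ₗ[ℝ] Q linear maps. Suppose x ∈ X, u ∈ V, γ ∈ Q and y ∈ X satisfy: (i) ⟪A x, τ⟫ + ⟪u, Dₑ τ⟫ + ⟪γ, S τ⟫ = −⟪A y, τ⟫ for all τ ∈ X; (ii) Dₑ x = 0; (iii) S x = 0. Then ⟪A x, x⟫ ≤ ⟪A y, y⟫. -/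
open scoped RealInnerProductSpace

/-! Testing the first equation with `τ = x` kills the multiplier terms and gives
`⟪A x, x⟫ = -⟪A y, x⟫`; expanding `0 ≤ ⟪A (x + y), x + y⟫` with the symmetry of `A` then yields
`0 ≤ ⟪A y, y⟫ - ⟪A x, x⟫`. -/

namespace LinearMap

variable {X : Type*} [NormedAddCommGroup X] [InnerProductSpace ℝ X]

theorem IsPositive.inner_map_self_le_of_inner_map_self_eq_neg {A : X →ₗ[ℝ] X}
    (hA : A.IsPositive) {x y : X} (h : ⟪A x, x⟫ = -⟪A y, x⟫) : ⟪A x, x⟫ ≤ ⟪A y, y⟫ := by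
  have hxy : ⟪A x, y⟫ = ⟪A y, x⟫ := by rw [hA.isSymmetric x y, real_inner_comm]
  have hsum := hA.inner_nonneg_left (x + y)
  simp only [map_add, inner_add_left, inner_add_right] at hsum
  linarith

end LinearMap

/-- Abstract mixed elasticity step: if `A` is symmetric positive semidefinite,
`⟪A x, τ⟫ + ⟪u, Dₑ τ⟫ + ⟪γ, S τ⟫ = -⟪A y, τ⟫` for all `τ`, `Dₑ x = 0` and `S x = 0`,
then `⟪A x, x⟫ ≤ ⟪A y, y⟫`. -/
theorem stmt_1 {X V Q : Type*}
    [NormedAddCommGroup X] [InnerProductSpace ℝ X]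
    [NormedAddCommGroup V] [InnerProductSpace ℝ V]
    [NormedAddCommGroup Q] [InnerProductSpace ℝ Q]
    (A : X →L[ℝ] X)
    (hsym : ∀ σ τ : X, ⟪A σ, τ⟫ = ⟪σ, A τ⟫)
    (hpos : ∀ τ : X, 0 ≤ ⟪A τ, τ⟫)
    (De : X →ₗ[ℝ] V) (S : X →ₗ[ℝ] Q)
    (x : X) (u : V) (γ : Q) (y : X)
    (h1 : ∀ τ : X, ⟪A x, τ⟫ + ⟪u, De τ⟫ + ⟪γ, S τ⟫ = -⟪A y, τ⟫)
    (h2 : De x = 0)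
    (h3 : S x = 0) :
    ⟪A x, x⟫ ≤ ⟪A y, y⟫ := by
  have hA : (A : X →ₗ[ℝ] X).IsPositive := ⟨hsym, hpos⟩
  have henergy : ⟪A x, x⟫ = -⟪A y, x⟫ := by
    simpa only [h2, h3, inner_zero_right, add_zero] using h1 x
  exact hA.inner_map_self_le_of_inner_map_self_eq_neg henergy
end

section
/- Let X, V, Q, W be real inner product spaces, A : X →L[ℝ] X a continuous linear operator that is symmetric (⟪A σ, τ⟫ = ⟪σ, A τ⟫) and satisfies 0 ≤ ⟪A τ, τ⟫ ≤ a_max ‖τ‖² for all τ ∈ X with a constant a_max > 0, ι : W →ₗ[ℝ] X a linear map with ‖ι w‖ ≤ c_ι ‖w‖ for all w ∈ W (c_ι > 0), and Dₑ : X →ₗ[ℝ] V, S : X →ₗ[ℝ] Q linear maps satisfying the elasticity inf-sup condition with constant β_e > 0: for every v ∈ V and ξ ∈ Q there exists τ ∈ X with (‖τ‖² + ‖Dₑ τ‖²)^{1/2} ≤ 1 and β_e (‖v‖ + ‖ξ‖) ≤ ⟪v, Dₑ τ⟫ + ⟪ξ, S τ⟫. Let α ∈ ℝ. If σ ∈ X,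 u ∈ V, γ ∈ Q, p ∈ W satisfy ⟪A σ, τ⟫ + ⟪u, Dₑ τ⟫ + ⟪γ, S τ⟫ = −α ⟪A (ι p), τ⟫ for all τ ∈ X, then β_e (‖u‖ + ‖γ‖) ≤ a_max^{1/2} ⟪A σ, σ⟫^{1/2} + |α| a_max c_ι ‖p‖. -/
/-! Test the variational equation against the inf-sup witness `τ` for `(u, γ)`, which has
`‖τ‖ ≤ 1`. The two remaining terms `⟪A σ, τ⟫` and `⟪A (ι p), τ⟫` are bounded by Cauchy–Schwarz for
the semi-inner product `⟪A ·, ·⟫`, combined with `⟪A τ, τ⟫ ≤ a_max ‖τ‖²`. -/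

open scoped RealInnerProductSpace

namespace LinearMap

variable {X : Type*} [NormedAddCommGroup X] [InnerProductSpace ℝ X] {A : X →ₗ[ℝ] X}

theorem abs_inner_map_le_sqrt_mul_sqrt (hsym : ∀ x y : X, ⟪A x, y⟫ = ⟪x, A y⟫)
    (hpos : ∀ x : X, 0 ≤ ⟪A x, x⟫) (x y : X) :
    |⟪A x, y⟫| ≤ √⟪A x, x⟫ * √⟪A y, y⟫ := by
  have hsq : ⟪A x, y⟫ ^ 2 ≤ ⟪A x, x⟫ * ⟪A y, y⟫ := by
    have := BilinForm.apply_mul_apply_le_of_forall_zero_le (innerₗ X ∘ₗ A) hpos x y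
    simp only [comp_apply, innerₗ_apply_apply] at this
    rwa [hsym y x, real_inner_comm (A x) y, ← sq] at this
  rw [← Real.sqrt_mul (hpos x), ← Real.sqrt_sq_eq_abs]
  exact Real.sqrt_le_sqrt hsq

theorem sqrt_inner_map_self_le {a : ℝ} (ha : 0 ≤ a) (hbound : ∀ x : X, ⟪A x, x⟫ ≤ a * ‖x‖ ^ 2)
    (x : X) : √⟪A x, x⟫ ≤ √a * ‖x‖ := by
  calc √⟪A x, x⟫ ≤ √(a * ‖x‖ ^ 2) := Real.sqrt_le_sqrt (hbound x)
    _ = √a * ‖x‖ := by rw [Real.sqrt_mul ha, Real.sqrt_sq (norm_nonneg x)]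

variable {a : ℝ} (ha : 0 ≤ a) (hsym : ∀ x y : X, ⟪A x, y⟫ = ⟪x, A y⟫)
  (hpos : ∀ x : X, 0 ≤ ⟪A x, x⟫) (hbound : ∀ x : X, ⟪A x, x⟫ ≤ a * ‖x‖ ^ 2)
include ha hsym hpos hbound

theorem abs_inner_map_le_sqrt_mul_sqrt_mul_norm (x y : X) :
    |⟪A x, y⟫| ≤ √a * √⟪A x, x⟫ * ‖y‖ := by
  calc |⟪A x, y⟫| ≤ √⟪A x, x⟫ * √⟪A y, y⟫ := abs_inner_map_le_sqrt_mul_sqrt hsym hpos x y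
    _ ≤ √⟪A x, x⟫ * (√a * ‖y‖) := by gcongr; exact sqrt_inner_map_self_le ha hbound y
    _ = √a * √⟪A x, x⟫ * ‖y‖ := by ring

theorem abs_inner_map_le_mul_norm_mul_norm (x y : X) : |⟪A x, y⟫| ≤ a * ‖x‖ * ‖y‖ := by
  calc |⟪A x, y⟫| ≤ √a * √⟪A x, x⟫ * ‖y‖ :=
        abs_inner_map_le_sqrt_mul_sqrt_mul_norm ha hsym hpos hbound x y
    _ ≤ √a * (√a * ‖x‖) * ‖y‖ := by gcongr; exact sqrt_inner_map_self_le ha hbound x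
    _ = a * ‖x‖ * ‖y‖ := by rw [← mul_assoc, Real.mul_self_sqrt ha]

end LinearMap

theorem norm_le_one_of_sqrt_norm_sq_add_sq_le_one {X V : Type*} [NormedAddCommGroup X]
    [NormedAddCommGroup V] {τ : X} {v : V} (h : √(‖τ‖ ^ 2 + ‖v‖ ^ 2) ≤ 1) : ‖τ‖ ≤ 1 := by
  calc ‖τ‖ = √(‖τ‖ ^ 2) := (Real.sqrt_sq (norm_nonneg τ)).symm
    _ ≤ √(‖τ‖ ^ 2 + ‖v‖ ^ 2) := Real.sqrt_le_sqrt (le_add_of_nonneg_right (sq_nonneg _))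
    _ ≤ 1 := h

theorem stmt_2_general {X V Q W : Type*}
    [NormedAddCommGroup X] [InnerProductSpace ℝ X]
    [NormedAddCommGroup V] [InnerProductSpace ℝ V]
    [NormedAddCommGroup Q] [InnerProductSpace ℝ Q]
    [NormedAddCommGroup W] [InnerProductSpace ℝ W]
    (A : X →L[ℝ] X) (a_max : ℝ) (ha_max : 0 < a_max)
    (hsym : ∀ σ τ : X, ⟪A σ, τ⟫ = ⟪σ, A τ⟫)
    (hpos : ∀ τ : X, 0 ≤ ⟪A τ, τ⟫)
    (hbound : ∀ τ : X, ⟪A τ, τ⟫ ≤ a_max * ‖τ‖ ^ 2)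
    (ι : W →ₗ[ℝ] X) (c_ι : ℝ)
    (hι : ∀ w : W, ‖ι w‖ ≤ c_ι * ‖w‖)
    (De : X →ₗ[ℝ] V) (S : X →ₗ[ℝ] Q)
    (β_e : ℝ)
    (hinfsup : ∀ (v : V) (ξ : Q), ∃ τ : X,
      Real.sqrt (‖τ‖ ^ 2 + ‖De τ‖ ^ 2) ≤ 1 ∧
      β_e * (‖v‖ + ‖ξ‖) ≤ ⟪v, De τ⟫ + ⟪ξ, S τ⟫)
    (α : ℝ)
    (σ : X) (u : V) (γ : Q) (p : W)
    (h : ∀ τ : X, ⟪A σ, τ⟫ + ⟪u, De τ⟫ + ⟪γ, S τ⟫ = -(α * ⟪A (ι p), τ⟫)) :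
    β_e * (‖u‖ + ‖γ‖) ≤
      Real.sqrt a_max * Real.sqrt ⟪A σ, σ⟫ + |α| * a_max * c_ι * ‖p‖ := by
  obtain ⟨τ, hτ_le, hτ_infsup⟩ := hinfsup u γ
  have hτ : ‖τ‖ ≤ 1 := norm_le_one_of_sqrt_norm_sq_add_sq_le_one hτ_le
  have hσ : |⟪A σ, τ⟫| ≤ √a_max * √⟪A σ, σ⟫ := by
    calc |⟪A σ, τ⟫| ≤ √a_max * √⟪A σ, σ⟫ * ‖τ‖ :=
          LinearMap.abs_inner_map_le_sqrt_mul_sqrt_mul_norm (A := A.toLinearMap) ha_max.le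
            hsym hpos hbound σ τ
      _ ≤ √a_max * √⟪A σ, σ⟫ := mul_le_of_le_one_right (by positivity) hτ
  have hp : |⟪A (ι p), τ⟫| ≤ a_max * c_ι * ‖p‖ := by
    calc |⟪A (ι p), τ⟫| ≤ a_max * ‖ι p‖ * ‖τ‖ :=
          LinearMap.abs_inner_map_le_mul_norm_mul_norm (A := A.toLinearMap) ha_max.le
            hsym hpos hbound (ι p) τ
      _ ≤ a_max * ‖ι p‖ := mul_le_of_le_one_right (by positivity) hτ
      _ ≤ a_max * (c_ι * ‖p‖) := by gcongr; exact hι p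
      _ = a_max * c_ι * ‖p‖ := (mul_assoc _ _ _).symm
  calc β_e * (‖u‖ + ‖γ‖) ≤ ⟪u, De τ⟫ + ⟪γ, S τ⟫ := hτ_infsup
    _ = -(α * ⟪A (ι p), τ⟫) - ⟪A σ, τ⟫ := by linarith [h τ]
    _ ≤ |α| * |⟪A (ι p), τ⟫| + |⟪A σ, τ⟫| := by
        rw [← abs_mul]
        linarith [neg_abs_le (α * ⟪A (ι p), τ⟫), neg_abs_le ⟪A σ, τ⟫]
    _ ≤ |α| * (a_max * c_ι * ‖p‖) + √a_max * √⟪A σ, σ⟫ := by gcongr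
    _ = √a_max * √⟪A σ, σ⟫ + |α| * a_max * c_ι * ‖p‖ := by ring

/-- Abstract displacement–rotation stability bound from the elasticity inf-sup condition. -/
theorem stmt_2 {X V Q W : Type*}
    [NormedAddCommGroup X] [InnerProductSpace ℝ X]
    [NormedAddCommGroup V] [InnerProductSpace ℝ V]
    [NormedAddCommGroup Q] [InnerProductSpace ℝ Q]
    [NormedAddCommGroup W] [InnerProductSpace ℝ W]
    (A : X →L[ℝ] X) (a_max : ℝ) (ha_max : 0 < a_max)
    (hsym : ∀ σ τ : X, ⟪A σ, τ⟫ = ⟪σ, A τ⟫)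
    (hpos : ∀ τ : X, 0 ≤ ⟪A τ, τ⟫)
    (hbound : ∀ τ : X, ⟪A τ, τ⟫ ≤ a_max * ‖τ‖ ^ 2)
    (ι : W →ₗ[ℝ] X) (c_ι : ℝ) (hc_ι : 0 < c_ι)
    (hι : ∀ w : W, ‖ι w‖ ≤ c_ι * ‖w‖)
    (De : X →ₗ[ℝ] V) (S : X →ₗ[ℝ] Q)
    (β_e : ℝ) (hβ_e : 0 < β_e)
    (hinfsup : ∀ (v : V) (ξ : Q), ∃ τ : X,
      Real.sqrt (‖τ‖ ^ 2 + ‖De τ‖ ^ 2) ≤ 1 ∧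
      β_e * (‖v‖ + ‖ξ‖) ≤ ⟪v, De τ⟫ + ⟪ξ, S τ⟫)
    (α : ℝ)
    (σ : X) (u : V) (γ : Q) (p : W)
    (h : ∀ τ : X, ⟪A σ, τ⟫ + ⟪u, De τ⟫ + ⟪γ, S τ⟫ = -(α * ⟪A (ι p), τ⟫)) :
    β_e * (‖u‖ + ‖γ‖) ≤
      Real.sqrt a_max * Real.sqrt ⟪A σ, σ⟫ + |α| * a_max * c_ι * ‖p‖ :=
  stmt_2_general A a_max ha_max hsym hpos hbound ι c_ι hι De S β_e hinfsup α σ u γ p h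
end

section
/- Let Z, W, Λ be real inner product spaces, D : Z →ₗ[ℝ] W a linear map satisfying the Darcy inf-sup condition with constant β_d > 0 (for every w ∈ W there exists q ∈ Z with (‖q‖² + ‖D q‖²)^{1/2} ≤ 1 and β_d ‖w‖ ≤ ⟪D q, w⟫), tr : Z →ₗ[ℝ] Λ a linear map with ‖tr q‖ ≤ c_tr ‖q‖ for all q ∈ Z (c_tr ≥ 0), and T : Z →L[ℝ] Z a continuous linear operator with ‖T q‖ ≤ M ‖q‖ for all q ∈ Z (M ≥ 0). If z ∈ Z, p ∈ W and λ ∈ Λ satisfy ⟪T z, q⟫ − ⟪p, D q⟫ = −⟪λ, tr q⟫ for all q ∈ Z, then β_d ‖p‖ ≤ M ‖z‖ + c_tr ‖λ‖. -/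
/-!
Test the equation against the inf-sup partner `q` of `p`: `β_d ‖p‖ ≤ ⟪D q, p⟫`, and the equation
rewrites `⟪p, D q⟫` as `⟪T z, q⟫ + ⟪λ, tr q⟫`. Since the graph norm of `q` is at most one, so is
`‖q‖`, and Cauchy–Schwarz bounds the two terms by `M ‖z‖` and `c_tr ‖λ‖`.
-/

open scoped RealInnerProductSpace

section

variable {E F : Type*} [NormedAddCommGroup E] [InnerProductSpace ℝ E]
  [NormedAddCommGroup F] [InnerProductSpace ℝ F]

theorem real_le_one_of_sqrt_sq_add_sq_le_one {a b : ℝ} (h : √(a ^ 2 + b ^ 2) ≤ 1) : a ≤ 1 :=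
  (Real.le_sqrt_of_sq_le (le_add_of_nonneg_right (sq_nonneg b))).trans h

theorem real_inner_le_mul_of_norm_le {x y : E} {c d : ℝ} (hx : ‖x‖ ≤ c) (hy : ‖y‖ ≤ d)
    (hc : 0 ≤ c) : ⟪x, y⟫ ≤ c * d :=
  (real_inner_le_norm x y).trans (mul_le_mul hx hy (norm_nonneg y) hc)

theorem mul_norm_le_of_infSup {D : E →ₗ[ℝ] F} {β C : ℝ}
    (hinfsup : ∀ w : F, ∃ q : E, ‖q‖ ≤ 1 ∧ β * ‖w‖ ≤ ⟪D q, w⟫) {p : F}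
    (hp : ∀ q : E, ‖q‖ ≤ 1 → ⟪p, D q⟫ ≤ C) : β * ‖p‖ ≤ C := by
  obtain ⟨q, hq, hβ⟩ := hinfsup p
  exact hβ.trans ((real_inner_comm p (D q)).le.trans (hp q hq))

end

theorem stmt_3_general {Z W Λ : Type*}
    [NormedAddCommGroup Z] [InnerProductSpace ℝ Z]
    [NormedAddCommGroup W] [InnerProductSpace ℝ W]
    [NormedAddCommGroup Λ] [InnerProductSpace ℝ Λ]
    (D : Z →ₗ[ℝ] W) (β_d : ℝ)
    (hinfsup : ∀ w : W, ∃ q : Z,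
      Real.sqrt (‖q‖ ^ 2 + ‖D q‖ ^ 2) ≤ 1 ∧ β_d * ‖w‖ ≤ ⟪D q, w⟫)
    (tr : Z →ₗ[ℝ] Λ) (c_tr : ℝ) (hc_tr : 0 ≤ c_tr)
    (htr : ∀ q : Z, ‖tr q‖ ≤ c_tr * ‖q‖)
    (T : Z →L[ℝ] Z) (M : ℝ)
    (hT : ∀ q : Z, ‖T q‖ ≤ M * ‖q‖)
    (z : Z) (p : W) (lam : Λ)
    (h : ∀ q : Z, ⟪T z, q⟫ - ⟪p, D q⟫ = -⟪lam, tr q⟫) :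
    β_d * ‖p‖ ≤ M * ‖z‖ + c_tr * ‖lam‖ := by
  have hinfsup' : ∀ w : W, ∃ q : Z, ‖q‖ ≤ 1 ∧ β_d * ‖w‖ ≤ ⟪D q, w⟫ := fun w ↦ by
    obtain ⟨q, hq, hβ⟩ := hinfsup w
    exact ⟨q, real_le_one_of_sqrt_sq_add_sq_le_one hq, hβ⟩
  refine mul_norm_le_of_infSup hinfsup' fun q hq ↦ ?_
  have hTz : ⟪T z, q⟫ ≤ M * ‖z‖ * 1 :=
    real_inner_le_mul_of_norm_le (hT z) hq ((norm_nonneg _).trans (hT z))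
  have htrq : ‖tr q‖ ≤ c_tr := (htr q).trans (mul_le_of_le_one_right hc_tr hq)
  have hlam : ⟪lam, tr q⟫ ≤ ‖lam‖ * c_tr :=
    real_inner_le_mul_of_norm_le le_rfl htrq (norm_nonneg lam)
  linarith [h q]

/-- Abstract pressure–velocity inequality from the Darcy inf-sup condition. -/
theorem stmt_3 {Z W Λ : Type*}
    [NormedAddCommGroup Z] [InnerProductSpace ℝ Z]
    [NormedAddCommGroup W] [InnerProductSpace ℝ W]
    [NormedAddCommGroup Λ] [InnerProductSpace ℝ Λ]
    (D : Z →ₗ[ℝ] W) (β_d : ℝ) (hβ_d : 0 < β_d)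
    (hinfsup : ∀ w : W, ∃ q : Z,
      Real.sqrt (‖q‖ ^ 2 + ‖D q‖ ^ 2) ≤ 1 ∧ β_d * ‖w‖ ≤ ⟪D q, w⟫)
    (tr : Z →ₗ[ℝ] Λ) (c_tr : ℝ) (hc_tr : 0 ≤ c_tr)
    (htr : ∀ q : Z, ‖tr q‖ ≤ c_tr * ‖q‖)
    (T : Z →L[ℝ] Z) (M : ℝ) (hM : 0 ≤ M)
    (hT : ∀ q : Z, ‖T q‖ ≤ M * ‖q‖)
    (z : Z) (p : W) (lam : Λ)
    (h : ∀ q : Z, ⟪T z, q⟫ - ⟪p, D q⟫ = -⟪lam, tr q⟫) :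
    β_d * ‖p‖ ≤ M * ‖z‖ + c_tr * ‖lam‖ :=
  stmt_3_general D β_d hinfsup tr c_tr hc_tr htr T M hT z p lam h
end

section
/- Let X, Z, W be real inner product spaces, A : X →L[ℝ] X and T : Z →L[ℝ] Z continuous linear operators, each symmetric (⟪A σ, τ⟫ = ⟪σ, A τ⟫ and ⟪T q, r⟫ = ⟪q, T r⟫) and positive semidefinite (0 ≤ ⟪A τ, τ⟫ and 0 ≤ ⟪T q, q⟫), ι : W →ₗ[ℝ] X and D : Z →ₗ[ℝ] W linear maps, and let c₀ ≥ 0, Δt > 0, α ∈ ℝ. Suppose z, z' ∈ Z, p, p' ∈ W and ζ ∈ X satisfy: (i) ⟪T(z' − z), q⟫ = ⟪p' − p, D q⟫ for all q ∈ Z; (ii) (c₀/Δt)⟪p' − p, w⟫ + (α²/Δt)⟪A ι(p' − p), ι w⟫ + ⟪D z', w⟫ = −(α/Δt)⟪A ζ, ι w⟫ for all w ∈ W. Then (c₀/Δt)‖p' − p‖² + (α²/(2Δt))⟪A ι(p' − p), ι(p' − p)⟫ + (1/2)⟪T(z' − z), z' − z⟫ + (1/2)⟪T z', z'⟫ ≤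 (1/2)⟪T z, z⟫ + (1/(2Δt))⟪A ζ, ζ⟫. -/
open scoped RealInnerProductSpace

/-! Test the flux equation with `z'` and the pressure equation with `p' - p`: the coupling terms
`⟪p' - p, D z'⟫` cancel, the flux term `⟪T (z' - z), z'⟫` is split by the symmetry of `T`, and the
remaining cross term `-(α / Δt) ⟪A ζ, ι (p' - p)⟫` is absorbed by Young's inequality for the
semi-inner product `⟪A ·, ·⟫`. -/

section

variable {E : Type*} [NormedAddCommGroup E] [InnerProductSpace ℝ E] {T : E →ₗ[ℝ] E}

theorem LinearMap.IsSymmetric.two_mul_inner_map_sub_eq (hT : T.IsSymmetric) (a b : E) :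
    2 * ⟪T (a - b), a⟫ = ⟪T (a - b), a - b⟫ + ⟪T a, a⟫ - ⟪T b, b⟫ := by
  simp only [map_sub, inner_sub_left, inner_sub_right]
  linarith [hT b a, real_inner_comm (T a) b]

theorem LinearMap.IsSymmetric.two_mul_inner_map_le (hT : T.IsSymmetric)
    (hpos : ∀ x, 0 ≤ ⟪T x, x⟫) (a b : E) :
    2 * ⟪T a, b⟫ ≤ ⟪T a, a⟫ + ⟪T b, b⟫ := by
  have h := hpos (a - b)
  simp only [map_sub, inner_sub_left, inner_sub_right] at h
  linarith [hT b a, real_inner_comm (T a) b]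

end

theorem stmt_4_general {X Z W : Type*}
    [NormedAddCommGroup X] [InnerProductSpace ℝ X]
    [NormedAddCommGroup Z] [InnerProductSpace ℝ Z]
    [NormedAddCommGroup W] [InnerProductSpace ℝ W]
    (A : X →L[ℝ] X) (T : Z →L[ℝ] Z)
    (hAsym : ∀ σ τ : X, ⟪A σ, τ⟫ = ⟪σ, A τ⟫)
    (hApos : ∀ τ : X, 0 ≤ ⟪A τ, τ⟫)
    (hTsym : ∀ q r : Z, ⟪T q, r⟫ = ⟪q, T r⟫)
    (ι : W →ₗ[ℝ] X) (D : Z →ₗ[ℝ] W)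
    (c₀ Δt α : ℝ) (hΔt : 0 < Δt)
    (z z' : Z) (p p' : W) (ζ : X)
    (h1 : ∀ q : Z, ⟪T (z' - z), q⟫ = ⟪p' - p, D q⟫)
    (h2 : ∀ w : W, c₀ / Δt * ⟪p' - p, w⟫ + α ^ 2 / Δt * ⟪A (ι (p' - p)), ι w⟫
      + ⟪D z', w⟫ = -(α / Δt * ⟪A ζ, ι w⟫)) :
    c₀ / Δt * ‖p' - p‖ ^ 2 + α ^ 2 / (2 * Δt) * ⟪A (ι (p' - p)), ι (p' - p)⟫
      + 1 / 2 * ⟪T (z' - z), z' - z⟫ + 1 / 2 * ⟪T z', z'⟫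
    ≤ 1 / 2 * ⟪T z, z⟫ + 1 / (2 * Δt) * ⟪A ζ, ζ⟫ := by
  have hpressure := h2 (p' - p)
  rw [real_inner_self_eq_norm_sq, real_inner_comm _ (D z'), ← h1] at hpressure
  have hflux := (show (T : Z →ₗ[ℝ] Z).IsSymmetric from hTsym).two_mul_inner_map_sub_eq z' z
  have hyoung := (show (A : X →ₗ[ℝ] X).IsSymmetric from hAsym).two_mul_inner_map_le hApos
    ζ (-α • ι (p' - p))
  simp only [ContinuousLinearMap.coe_coe, map_smul, real_inner_smul_left,
    real_inner_smul_right] at hflux hyoung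
  linear_combination hpressure - hflux / 2 + 1 / (2 * Δt) * hyoung

/-- Abstract per-time-step flow energy inequality for the split schemes. -/
theorem stmt_4 {X Z W : Type*}
    [NormedAddCommGroup X] [InnerProductSpace ℝ X]
    [NormedAddCommGroup Z] [InnerProductSpace ℝ Z]
    [NormedAddCommGroup W] [InnerProductSpace ℝ W]
    (A : X →L[ℝ] X) (T : Z →L[ℝ] Z)
    (hAsym : ∀ σ τ : X, ⟪A σ, τ⟫ = ⟪σ, A τ⟫)
    (hApos : ∀ τ : X, 0 ≤ ⟪A τ, τ⟫)
    (hTsym : ∀ q r : Z, ⟪T q, r⟫ = ⟪q, T r⟫)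
    (hTpos : ∀ q : Z, 0 ≤ ⟪T q, q⟫)
    (ι : W →ₗ[ℝ] X) (D : Z →ₗ[ℝ] W)
    (c₀ Δt α : ℝ) (hc₀ : 0 ≤ c₀) (hΔt : 0 < Δt)
    (z z' : Z) (p p' : W) (ζ : X)
    (h1 : ∀ q : Z, ⟪T (z' - z), q⟫ = ⟪p' - p, D q⟫)
    (h2 : ∀ w : W, c₀ / Δt * ⟪p' - p, w⟫ + α ^ 2 / Δt * ⟪A (ι (p' - p)), ι w⟫
      + ⟪D z', w⟫ = -(α / Δt * ⟪A ζ, ι w⟫)) :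
    c₀ / Δt * ‖p' - p‖ ^ 2 + α ^ 2 / (2 * Δt) * ⟪A (ι (p' - p)), ι (p' - p)⟫
      + 1 / 2 * ⟪T (z' - z), z' - z⟫ + 1 / 2 * ⟪T z', z'⟫
    ≤ 1 / 2 * ⟪T z, z⟫ + 1 / (2 * Δt) * ⟪A ζ, ζ⟫ :=
  stmt_4_general A T hAsym hApos hTsym ι D c₀ Δt α hΔt z z' p p' ζ h1 h2
end

section
/- Unconditional stability of the drained split scheme: Fix constants a_max > 0, 0 < k_min ≤ k_max, β_e > 0, β_d > 0, c_ι > 0 and 0 < α ≤ 1. There exists a constant C, depending only on α, a_max, k_min, k_max, β_e, β_d and c_ι — in particular independent of N, Δt, c₀, a_min and of the spaces, operators and sequences below — such that the following holds. Let X, V, Q, Z, W be real inner product spaces; A : X →L[ℝ] X symmetric with a_min ‖τ‖² ≤ ⟪A τ, τ⟫ ≤ a_max ‖τ‖² for all τ (for some a_min > 0); T : Z →L[ℝ] Z symmetric with (1/k_max)‖q‖² ≤ ⟪T q, q⟫ ≤ (1/k_min)‖q‖² for all q; Dₑ : X →ₗ V, S : X →ₗ Q, D : Z →ₗ W linear maps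 satisfying the elasticity inf-sup condition with constant β_e and the Darcy inf-sup condition with constant β_d; ι : W →ₗ X linear with ‖ι w‖ ≤ c_ι ‖w‖ for all w; c₀ ≥ 0, Δt > 0, N ≥ 1. Suppose σ⁰,…,σᴺ ∈ X, u⁰,…,uᴺ ∈ V, γ⁰,…,γᴺ ∈ Q, z⁰,…,zᴺ ∈ Z, p⁰,…,pᴺ ∈ W satisfy, with the convention p^{−1} := p⁰, for every n = −1, 0, …, N−1: (i) ⟪A σ^{n+1}, τ⟫ + ⟪u^{n+1}, Dₑ τ⟫ + ⟪γ^{n+1}, S τ⟫ = −α ⟪A(ι p^{n}), τ⟫ for all τ ∈ X; (ii) Dₑ σ^{n+1} = 0; (iii) S σ^{n+1} = 0; (iv) ⟪T z^{n+1}, q⟫ = ⟪p^{n+1}, D q⟫ for all q ∈ Z; and for every n = 0, …, N−1: (v) (c₀/Δt)⟪p^{n+1} − p^{n}, w⟫ + (α²/Δt)⟪A ι(p^{n+1} − p^{n}), ι w⟫ + ⟪D z^{n+1}, w⟫ = −(α/Δt)⟪A(σ^{n+1} − σ^{n}), ι w⟫ for all w ∈ W. Then Σ_{n=0}^{N−1}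 (c₀/Δt)‖p^{n+1} − p^{n}‖² + max_{0 ≤ n ≤ N−1} ( ‖z^{n+1}‖² + ‖p^{n+1}‖² + ⟪A σ^{n+1}, σ^{n+1}⟫ + ‖u^{n+1}‖² + ‖γ^{n+1}‖² ) ≤ C (‖p⁰‖² + ‖z⁰‖²). -/
/-!
Testing the flow equation (v) with the pressure increment `pⁿ⁺¹ - pⁿ` and the Darcy law (iv)
with `zⁿ⁺¹` shows that the energy `α²/(2Δt) ‖ι(pⁿ - pⁿ⁻¹)‖²_A + ½ ‖zⁿ‖²_T` drops by at least
`c₀/Δt ‖pⁿ⁺¹ - pⁿ‖²` per step: the coupling term is absorbed by Young's inequality, because the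
mechanics problem (i)–(iii), tested with the stress increment, gives
`‖σⁿ⁺¹ - σⁿ‖_A ≤ α ‖ι(pⁿ - pⁿ⁻¹)‖_A`. As `p⁻¹ = p⁰`, the initial energy is `½ ‖z⁰‖²_T`.
The flux bound controls the pressure through the Darcy inf-sup condition, the pressure controls
the stress, and the elasticity inf-sup condition controls displacement and rotation.
-/

open scoped RealInnerProductSpace

namespace ContinuousLinearMap.IsPositive

variable {E : Type*} [NormedAddCommGroup E] [InnerProductSpace ℝ E] {B : E →L[ℝ] E}

theorem inner_apply_comm (hB : B.IsPositive) (x y : E) : ⟪B x, y⟫ = ⟪B y, x⟫ := by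
  rw [hB.inner_left_eq_inner_right, real_inner_comm]

theorem inner_add_smul_self_eq (hB : B.IsPositive) (x y : E) (t : ℝ) :
    ⟪B (x + t • y), x + t • y⟫ = ⟪B y, y⟫ * (t * t) + 2 * ⟪B x, y⟫ * t + ⟪B x, x⟫ := by
  simp only [map_add, map_smul, inner_add_left, inner_add_right, real_inner_smul_left,
    real_inner_smul_right, hB.inner_apply_comm y x]
  ring

theorem inner_sq_le_inner_self_mul_inner_self (hB : B.IsPositive) (x y : E) :
    ⟪B x, y⟫ ^ 2 ≤ ⟪B x, x⟫ * ⟪B y, y⟫ := by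
  have h := discrim_le_zero fun t =>
    (hB.inner_add_smul_self_eq x y t).symm ▸ hB.inner_nonneg_left _
  rw [discrim] at h
  nlinarith

theorem two_mul_inner_le_inner_self_add_inner_self (hB : B.IsPositive) (x y : E) :
    2 * ⟪B x, y⟫ ≤ ⟪B x, x⟫ + ⟪B y, y⟫ := by
  have h := hB.inner_add_smul_self_eq x y (-1)
  have := hB.inner_nonneg_left (x + (-1 : ℝ) • y)
  linarith

theorem inner_self_sub_inner_self_le (hB : B.IsPositive) (x y : E) :
    ⟪B x, x⟫ - ⟪B y, y⟫ ≤ 2 * ⟪B x, x - y⟫ := by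
  rw [inner_sub_right]
  linarith [hB.two_mul_inner_le_inner_self_add_inner_self x y]

theorem inner_self_le_of_eq_neg_mul (hB : B.IsPositive) {x y : E} {c : ℝ}
    (h : ⟪B x, x⟫ = -(c * ⟪B y, x⟫)) : ⟪B x, x⟫ ≤ c ^ 2 * ⟪B y, y⟫ := by
  have := hB.two_mul_inner_le_inner_self_add_inner_self (-(c • y)) x
  simp only [map_neg, map_smul, inner_neg_left, inner_neg_right, real_inner_smul_left,
    real_inner_smul_right] at this
  nlinarith

end ContinuousLinearMap.IsPositive

theorem sq_le_one_of_sqrt_add_sq_le_one {a b : ℝ} (h : √(a ^ 2 + b ^ 2) ≤ 1) : a ^ 2 ≤ 1 := by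
  rw [Real.sqrt_le_one] at h
  nlinarith [sq_nonneg b]

theorem sum_range_add_le_of_forall_add_le {N : ℕ} {f g : ℕ → ℝ}
    (h : ∀ n < N, g n + f (n + 1) ≤ f n) {m : ℕ} (hm : m ≤ N) :
    ∑ k ∈ Finset.range m, g k + f m ≤ f 0 := by
  have : ∑ k ∈ Finset.range m, g k ≤ ∑ k ∈ Finset.range m, (f k - f (k + 1)) :=
    Finset.sum_le_sum fun k hk => by linarith [h k ((Finset.mem_range.1 hk).trans_le hm)]
  rw [Finset.sum_range_sub'] at this
  linarith

section DrainedSplit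

variable {X V Q Z W : Type*}
  [NormedAddCommGroup X] [InnerProductSpace ℝ X] [NormedAddCommGroup V] [InnerProductSpace ℝ V]
  [NormedAddCommGroup Q] [InnerProductSpace ℝ Q] [NormedAddCommGroup Z] [InnerProductSpace ℝ Z]
  [NormedAddCommGroup W] [InnerProductSpace ℝ W]
  {A : X →L[ℝ] X} {T : Z →L[ℝ] Z} {De : X →ₗ[ℝ] V} {S : X →ₗ[ℝ] Q} {D : Z →ₗ[ℝ] W}
  {ι : W →ₗ[ℝ] X} {α : ℝ}

theorem inner_map_map_self_le {a c : ℝ} (hAup : ∀ τ : X, ⟪A τ, τ⟫ ≤ a * ‖τ‖ ^ 2) (ha : 0 ≤ a)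
    (hι : ∀ w : W, ‖ι w‖ ≤ c * ‖w‖) (w : W) :
    ⟪A (ι w), ι w⟫ ≤ a * c ^ 2 * ‖w‖ ^ 2 :=
  calc ⟪A (ι w), ι w⟫ ≤ a * ‖ι w‖ ^ 2 := hAup (ι w)
    _ ≤ a * (c * ‖w‖) ^ 2 := by gcongr; exact hι w
    _ = a * c ^ 2 * ‖w‖ ^ 2 := by ring

theorem sq_norm_le_of_inner_self_le {k E : ℝ} {z : Z} (hTlow : ∀ q : Z, 1 / k * ‖q‖ ^ 2 ≤ ⟪T q, q⟫)
    (hk : 0 < k) (hE : ⟪T z, z⟫ ≤ E) : ‖z‖ ^ 2 ≤ k * E :=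
  calc ‖z‖ ^ 2 = k * (1 / k * ‖z‖ ^ 2) := by field_simp
    _ ≤ k * E := mul_le_mul_of_nonneg_left ((hTlow z).trans hE) hk.le

theorem sq_norm_le_of_darcy {K β_d E : ℝ} {z : Z} {p : W} (hT : T.IsPositive)
    (hTup : ∀ q : Z, ⟪T q, q⟫ ≤ K * ‖q‖ ^ 2) (hK : 0 ≤ K) (hβ_d : 0 < β_d)
    (hinfsup : ∀ w : W, ∃ q : Z, √(‖q‖ ^ 2 + ‖D q‖ ^ 2) ≤ 1 ∧ β_d * ‖w‖ ≤ ⟪D q, w⟫)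
    (hd : ∀ q, ⟪T z, q⟫ = ⟪p, D q⟫) (hE : ⟪T z, z⟫ ≤ E) :
    ‖p‖ ^ 2 ≤ K * E / β_d ^ 2 := by
  obtain ⟨q, hq, hβq⟩ := hinfsup p
  have hTq : ⟪T q, q⟫ ≤ K := by
    nlinarith [hTup q, sq_le_one_of_sqrt_add_sq_le_one hq]
  rw [real_inner_comm, ← hd] at hβq
  rw [le_div_iff₀ (by positivity)]
  calc ‖p‖ ^ 2 * β_d ^ 2 = (β_d * ‖p‖) ^ 2 := by ring
    _ ≤ ⟪T z, q⟫ ^ 2 := pow_le_pow_left₀ (by positivity) hβq 2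
    _ ≤ ⟪T z, z⟫ * ⟪T q, q⟫ := hT.inner_sq_le_inner_self_mul_inner_self z q
    _ ≤ E * K := mul_le_mul hE hTq (hT.inner_nonneg_left q) ((hT.inner_nonneg_left z).trans hE)
    _ = K * E := mul_comm E K

structure IsMechanicsSolution (A : X →L[ℝ] X) (De : X →ₗ[ℝ] V) (S : X →ₗ[ℝ] Q) (α : ℝ)
    (y σ : X) (u : V) (γ : Q) : Prop where
  constitutive : ∀ τ : X, ⟪A σ, τ⟫ + ⟪u, De τ⟫ + ⟪γ, S τ⟫ = -(α * ⟪A y, τ⟫)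
  div_eq_zero : De σ = 0
  skew_eq_zero : S σ = 0

namespace IsMechanicsSolution

variable {y y' σ σ' : X} {u u' : V} {γ γ' : Q}

theorem sub (h : IsMechanicsSolution A De S α y σ u γ)
    (h' : IsMechanicsSolution A De S α y' σ' u' γ') :
    IsMechanicsSolution A De S α (y - y') (σ - σ') (u - u') (γ - γ') := by
  refine ⟨fun τ => ?_, by rw [map_sub, h.div_eq_zero, h'.div_eq_zero, sub_zero],
    by rw [map_sub, h.skew_eq_zero, h'.skew_eq_zero, sub_zero]⟩
  simp only [map_sub, inner_sub_left]
  linarith [h.constitutive τ, h'.constitutive τ]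

theorem inner_self_le (hA : A.IsPositive) (h : IsMechanicsSolution A De S α y σ u γ) :
    ⟪A σ, σ⟫ ≤ α ^ 2 * ⟪A y, y⟫ :=
  hA.inner_self_le_of_eq_neg_mul <| by
    simpa [h.div_eq_zero, h.skew_eq_zero] using h.constitutive σ

theorem sq_mul_sq_norm_add_sq_norm_le {a_max β_e : ℝ} (hA : A.IsPositive)
    (hAup : ∀ τ : X, ⟪A τ, τ⟫ ≤ a_max * ‖τ‖ ^ 2) (ha_max : 0 ≤ a_max) (hβ_e : 0 ≤ β_e)
    (hinfsup : ∀ (v : V) (ξ : Q), ∃ τ : X,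
      √(‖τ‖ ^ 2 + ‖De τ‖ ^ 2) ≤ 1 ∧ β_e * (‖v‖ + ‖ξ‖) ≤ ⟪v, De τ⟫ + ⟪ξ, S τ⟫)
    (h : IsMechanicsSolution A De S α y σ u γ) :
    β_e ^ 2 * (‖u‖ ^ 2 + ‖γ‖ ^ 2) ≤ 4 * α ^ 2 * a_max * ⟪A y, y⟫ := by
  obtain ⟨τ, hτ, hβτ⟩ := hinfsup u γ
  have hAτ : ⟪A τ, τ⟫ ≤ a_max := by
    nlinarith [hAup τ, sq_le_one_of_sqrt_add_sq_le_one hτ]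
  have hy := hA.inner_sq_le_inner_self_mul_inner_self y τ
  have hσ := hA.inner_sq_le_inner_self_mul_inner_self σ τ
  have hσy := h.inner_self_le hA
  have hyτ : ⟪A y, τ⟫ ^ 2 ≤ a_max * ⟪A y, y⟫ := by
    nlinarith [hA.inner_nonneg_left y]
  have hστ : ⟪A σ, τ⟫ ^ 2 ≤ α ^ 2 * (a_max * ⟪A y, y⟫) := by
    nlinarith [hA.inner_nonneg_left σ, hA.inner_nonneg_left τ]
  have hload : β_e * (‖u‖ + ‖γ‖) ≤ -(α * ⟪A y, τ⟫) - ⟪A σ, τ⟫ := by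
    linarith [h.constitutive τ]
  calc β_e ^ 2 * (‖u‖ ^ 2 + ‖γ‖ ^ 2) ≤ (β_e * (‖u‖ + ‖γ‖)) ^ 2 := by
        nlinarith [mul_nonneg (norm_nonneg u) (norm_nonneg γ), sq_nonneg β_e]
    _ ≤ (-(α * ⟪A y, τ⟫) - ⟪A σ, τ⟫) ^ 2 := pow_le_pow_left₀ (by positivity) hload 2
    _ ≤ 2 * (α ^ 2 * ⟪A y, τ⟫ ^ 2) + 2 * ⟪A σ, τ⟫ ^ 2 := by
        nlinarith [sq_nonneg (α * ⟪A y, τ⟫ - ⟪A σ, τ⟫)]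
    _ ≤ 4 * α ^ 2 * a_max * ⟪A y, y⟫ := by nlinarith [sq_nonneg α]

theorem inner_self_add_sq_norm_add_sq_norm_le {a_max β_e c_ι : ℝ} {q : W} (hA : A.IsPositive)
    (hAup : ∀ τ : X, ⟪A τ, τ⟫ ≤ a_max * ‖τ‖ ^ 2) (ha_max : 0 ≤ a_max) (hβ_e : 0 < β_e)
    (hinfsup : ∀ (v : V) (ξ : Q), ∃ τ : X,
      √(‖τ‖ ^ 2 + ‖De τ‖ ^ 2) ≤ 1 ∧ β_e * (‖v‖ + ‖ξ‖) ≤ ⟪v, De τ⟫ + ⟪ξ, S τ⟫)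
    (hι : ∀ w : W, ‖ι w‖ ≤ c_ι * ‖w‖) (h : IsMechanicsSolution A De S α (ι q) σ u γ) :
    ⟪A σ, σ⟫ + ‖u‖ ^ 2 + ‖γ‖ ^ 2
      ≤ α ^ 2 * a_max * c_ι ^ 2 * (1 + 4 * a_max / β_e ^ 2) * ‖q‖ ^ 2 := by
  have huγ : ‖u‖ ^ 2 + ‖γ‖ ^ 2 ≤ 4 * a_max / β_e ^ 2 * (α ^ 2 * ⟪A (ι q), ι q⟫) := by
    rw [div_mul_eq_mul_div, le_div_iff₀ (by positivity)]
    linarith [h.sq_mul_sq_norm_add_sq_norm_le hA hAup ha_max hβ_e.le hinfsup]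
  calc ⟪A σ, σ⟫ + ‖u‖ ^ 2 + ‖γ‖ ^ 2
        ≤ (1 + 4 * a_max / β_e ^ 2) * (α ^ 2 * ⟪A (ι q), ι q⟫) := by
        linarith [h.inner_self_le hA]
    _ ≤ (1 + 4 * a_max / β_e ^ 2) * (α ^ 2 * (a_max * c_ι ^ 2 * ‖q‖ ^ 2)) := by
        gcongr; exact inner_map_map_self_le hAup ha_max hι q
    _ = α ^ 2 * a_max * c_ι ^ 2 * (1 + 4 * a_max / β_e ^ 2) * ‖q‖ ^ 2 := by ring

end IsMechanicsSolution

noncomputable def splitEnergy (A : X →L[ℝ] X) (T : Z →L[ℝ] Z) (ι : W →ₗ[ℝ] X) (α Δt : ℝ)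
    (p₀ p₁ : W) (z : Z) : ℝ :=
  α ^ 2 / (2 * Δt) * ⟪A (ι (p₁ - p₀)), ι (p₁ - p₀)⟫ + ⟪T z, z⟫ / 2

theorem add_splitEnergy_le_splitEnergy {c₀ Δt : ℝ} {p₀ p₁ p₂ : W} {σ₁ σ₂ : X} {u₁ u₂ : V}
    {γ₁ γ₂ : Q} {z₁ z₂ : Z} (hA : A.IsPositive) (hT : T.IsPositive) (hΔt : 0 ≤ Δt)
    (hm₁ : IsMechanicsSolution A De S α (ι p₀) σ₁ u₁ γ₁)
    (hm₂ : IsMechanicsSolution A De S α (ι p₁) σ₂ u₂ γ₂)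
    (hd₁ : ∀ q, ⟪T z₁, q⟫ = ⟪p₁, D q⟫) (hd₂ : ∀ q, ⟪T z₂, q⟫ = ⟪p₂, D q⟫)
    (hflow : ∀ w, c₀ / Δt * ⟪p₂ - p₁, w⟫ + α ^ 2 / Δt * ⟪A (ι (p₂ - p₁)), ι w⟫ + ⟪D z₂, w⟫
        = -(α / Δt * ⟪A (σ₂ - σ₁), ι w⟫)) :
    c₀ / Δt * ‖p₂ - p₁‖ ^ 2 + splitEnergy A T ι α Δt p₁ p₂ z₂
      ≤ splitEnergy A T ι α Δt p₀ p₁ z₁ := by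
  have htested := hflow (p₂ - p₁)
  rw [real_inner_self_eq_norm_sq] at htested
  have hdarcy : ⟪D z₂, p₂ - p₁⟫ = ⟪T z₂, z₂ - z₁⟫ := by
    rw [real_inner_comm, inner_sub_left, ← hd₂, ← hd₁, inner_sub_right, hT.inner_apply_comm z₂ z₁]
  have hz := hT.inner_self_sub_inner_self_le z₂ z₁
  have hσ := (hm₂.sub hm₁).inner_self_le hA
  rw [← map_sub] at hσ
  have hyoung := hA.two_mul_inner_le_inner_self_add_inner_self (-(σ₂ - σ₁)) (α • ι (p₂ - p₁))
  simp only [map_neg, map_smul, inner_neg_left, inner_neg_right, real_inner_smul_left,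
    real_inner_smul_right] at hyoung
  simp only [splitEnergy]
  set e₁ := ⟪A (ι (p₁ - p₀)), ι (p₁ - p₀)⟫
  set e₂ := ⟪A (ι (p₂ - p₁)), ι (p₂ - p₁)⟫
  set c := ⟪A (σ₂ - σ₁), ι (p₂ - p₁)⟫
  have hcoupling : -(α / Δt * c) ≤ α ^ 2 / (2 * Δt) * (e₁ + e₂) := by
    have : -(2 * α * c) ≤ α ^ 2 * (e₁ + e₂) := by nlinarith
    calc -(α / Δt * c) = -(2 * α * c) / (2 * Δt) := by ring
      _ ≤ α ^ 2 * (e₁ + e₂) / (2 * Δt) := by gcongr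
      _ = α ^ 2 / (2 * Δt) * (e₁ + e₂) := by ring
  have hhalf : α ^ 2 / Δt * e₂ = 2 * (α ^ 2 / (2 * Δt) * e₂) := by ring
  linarith

/-- The truncated subtraction in `p (n - 1)` encodes the convention `p⁻¹ := p⁰`. -/
structure IsDrainedSplitSolution (A : X →L[ℝ] X) (T : Z →L[ℝ] Z) (De : X →ₗ[ℝ] V)
    (S : X →ₗ[ℝ] Q) (D : Z →ₗ[ℝ] W) (ι : W →ₗ[ℝ] X) (α c₀ Δt : ℝ) (N : ℕ) (σ : ℕ → X)
    (u : ℕ → V) (γ : ℕ → Q) (z : ℕ → Z) (p : ℕ → W) : Prop where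
  mechanics : ∀ n ≤ N, IsMechanicsSolution A De S α (ι (p (n - 1))) (σ n) (u n) (γ n)
  darcy : ∀ n ≤ N, ∀ q : Z, ⟪T (z n), q⟫ = ⟪p n, D q⟫
  flow : ∀ n < N, ∀ w : W,
    c₀ / Δt * ⟪p (n + 1) - p n, w⟫ + α ^ 2 / Δt * ⟪A (ι (p (n + 1) - p n)), ι w⟫
      + ⟪D (z (n + 1)), w⟫ = -(α / Δt * ⟪A (σ (n + 1) - σ n), ι w⟫)

namespace IsDrainedSplitSolution

variable {c₀ Δt : ℝ} {N : ℕ} {σ : ℕ → X} {u : ℕ → V} {γ : ℕ → Q} {z : ℕ → Z} {p : ℕ → W}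

theorem sum_add_inner_flux_le (hA : A.IsPositive) (hT : T.IsPositive) (hΔt : 0 ≤ Δt)
    (h : IsDrainedSplitSolution A T De S D ι α c₀ Δt N σ u γ z p) {m : ℕ} (hm : m ≤ N) :
    ∑ k ∈ Finset.range m, c₀ / Δt * ‖p (k + 1) - p k‖ ^ 2 + ⟪T (z m), z m⟫ / 2
      ≤ ⟪T (z 0), z 0⟫ / 2 := by
  have henergy := sum_range_add_le_of_forall_add_le
    (f := fun n => splitEnergy A T ι α Δt (p (n - 1)) (p n) (z n))
    (g := fun n => c₀ / Δt * ‖p (n + 1) - p n‖ ^ 2)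
    (fun n hn => add_splitEnergy_le_splitEnergy hA hT hΔt (h.mechanics n hn.le)
      (h.mechanics (n + 1) hn) (h.darcy n hn.le) (h.darcy (n + 1) hn) (h.flow n hn)) hm
  have hnonneg : 0 ≤ α ^ 2 / (2 * Δt) * ⟪A (ι (p m - p (m - 1))), ι (p m - p (m - 1))⟫ :=
    mul_nonneg (by positivity) (hA.inner_nonneg_left _)
  simp only [splitEnergy, zero_tsub, sub_self, map_zero, inner_zero_left, mul_zero,
    zero_add] at henergy
  linarith

theorem inner_flux_le_inner_flux_zero (hA : A.IsPositive) (hT : T.IsPositive) (hc₀ : 0 ≤ c₀)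
    (hΔt : 0 ≤ Δt)
    (h : IsDrainedSplitSolution A T De S D ι α c₀ Δt N σ u γ z p) {m : ℕ} (hm : m ≤ N) :
    ⟪T (z m), z m⟫ ≤ ⟪T (z 0), z 0⟫ := by
  have : 0 ≤ ∑ k ∈ Finset.range m, c₀ / Δt * ‖p (k + 1) - p k‖ ^ 2 :=
    Finset.sum_nonneg fun _ _ => by positivity
  linarith [h.sum_add_inner_flux_le hA hT hΔt hm]

end IsDrainedSplitSolution

end DrainedSplit

theorem stmt_5_general (α a_max k_min k_max β_e β_d c_ι : ℝ)
    (ha_max : 0 < a_max)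
    (hk_min : 0 < k_min) (hk : k_min ≤ k_max)
    (hβ_e : 0 < β_e) (hβ_d : 0 < β_d) :
    ∃ C : ℝ, ∀ (X V Q Z W : Type*)
      [NormedAddCommGroup X] [InnerProductSpace ℝ X]
      [NormedAddCommGroup V] [InnerProductSpace ℝ V]
      [NormedAddCommGroup Q] [InnerProductSpace ℝ Q]
      [NormedAddCommGroup Z] [InnerProductSpace ℝ Z]
      [NormedAddCommGroup W] [InnerProductSpace ℝ W]
      (A : X →L[ℝ] X) (T : Z →L[ℝ] Z)
      (De : X →ₗ[ℝ] V) (S : X →ₗ[ℝ] Q) (D : Z →ₗ[ℝ] W) (ι : W →ₗ[ℝ] X)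
      (c₀ Δt : ℝ) (N : ℕ)
      (σ : ℕ → X) (u : ℕ → V) (γ : ℕ → Q) (z : ℕ → Z) (p : ℕ → W)
      (hAsym : ∀ σ' τ : X, ⟪A σ', τ⟫ = ⟪σ', A τ⟫)
      (hAlow : ∃ a_min : ℝ, 0 < a_min ∧ ∀ τ : X, a_min * ‖τ‖ ^ 2 ≤ ⟪A τ, τ⟫)
      (hAup : ∀ τ : X, ⟪A τ, τ⟫ ≤ a_max * ‖τ‖ ^ 2)
      (hTsym : ∀ q r : Z, ⟪T q, r⟫ = ⟪q, T r⟫)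
      (hTlow : ∀ q : Z, 1 / k_max * ‖q‖ ^ 2 ≤ ⟪T q, q⟫)
      (hTup : ∀ q : Z, ⟪T q, q⟫ ≤ 1 / k_min * ‖q‖ ^ 2)
      (hinfsupE : ∀ (v : V) (ξ : Q), ∃ τ : X,
        Real.sqrt (‖τ‖ ^ 2 + ‖De τ‖ ^ 2) ≤ 1 ∧
        β_e * (‖v‖ + ‖ξ‖) ≤ ⟪v, De τ⟫ + ⟪ξ, S τ⟫)
      (hinfsupD : ∀ w : W, ∃ q : Z,
        Real.sqrt (‖q‖ ^ 2 + ‖D q‖ ^ 2) ≤ 1 ∧ β_d * ‖w‖ ≤ ⟪D q, w⟫)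
      (hι : ∀ w : W, ‖ι w‖ ≤ c_ι * ‖w‖)
      (hc₀ : 0 ≤ c₀) (hΔt : 0 < Δt) (hN : 1 ≤ N)
      (hi : ∀ n : ℕ, n ≤ N → ∀ τ : X,
        ⟪A (σ n), τ⟫ + ⟪u n, De τ⟫ + ⟪γ n, S τ⟫ = -(α * ⟪A (ι (p (n - 1))), τ⟫))
      (hii : ∀ n : ℕ, n ≤ N → De (σ n) = 0)
      (hiii : ∀ n : ℕ, n ≤ N → S (σ n) = 0)
      (hiv : ∀ n : ℕ, n ≤ N → ∀ q : Z, ⟪T (z n), q⟫ = ⟪p n, D q⟫)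
      (hv : ∀ n : ℕ, n < N → ∀ w : W,
        c₀ / Δt * ⟪p (n + 1) - p n, w⟫
          + α ^ 2 / Δt * ⟪A (ι (p (n + 1) - p n)), ι w⟫
          + ⟪D (z (n + 1)), w⟫
        = -(α / Δt * ⟪A (σ (n + 1) - σ n), ι w⟫)),
      (∑ n ∈ Finset.range N, c₀ / Δt * ‖p (n + 1) - p n‖ ^ 2)
        + ((Finset.range N).sup'
            (Finset.nonempty_range_iff.mpr (Nat.one_le_iff_ne_zero.mp hN))
            fun n => ‖z (n + 1)‖ ^ 2 + ‖p (n + 1)‖ ^ 2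
              + ⟪A (σ (n + 1)), σ (n + 1)⟫ + ‖u (n + 1)‖ ^ 2 + ‖γ (n + 1)‖ ^ 2)
      ≤ C * (‖p 0‖ ^ 2 + ‖z 0‖ ^ 2) := by
  set κ := α ^ 2 * a_max * c_ι ^ 2 * (1 + 4 * a_max / β_e ^ 2) with hκ_def
  have hκ : 0 ≤ κ := by rw [hκ_def]; positivity
  refine ⟨1 / k_min / 2 + k_max / k_min + (1 + κ) / (β_d ^ 2 * k_min ^ 2), ?_⟩
  intro X V Q Z W _ _ _ _ _ _ _ _ _ _ A T De S D ι c₀ Δt N σ u γ z p hAsym hAlow hAup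
    hTsym hTlow hTup hinfsupE hinfsupD hι hc₀ hΔt hN hi hii hiii hiv hv
  obtain ⟨a_min, ha_min, hAlow⟩ := hAlow
  have hk_max : 0 < k_max := hk_min.trans_le hk
  have hA : A.IsPositive :=
    A.isPositive_iff.2 ⟨hAsym, fun τ => le_trans (by positivity) (hAlow τ)⟩
  have hT : T.IsPositive := T.isPositive_iff.2 ⟨hTsym, fun q => le_trans (by positivity) (hTlow q)⟩
  have hsol : IsDrainedSplitSolution A T De S D ι α c₀ Δt N σ u γ z p :=
    ⟨fun n hn => ⟨hi n hn, hii n hn, hiii n hn⟩, hiv, hv⟩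
  have hTz m (hm : m ≤ N) : ⟪T (z m), z m⟫ ≤ 1 / k_min * ‖z 0‖ ^ 2 :=
    (hsol.inner_flux_le_inner_flux_zero hA hT hc₀ hΔt.le hm).trans (hTup (z 0))
  have hp m (hm : m ≤ N) := sq_norm_le_of_darcy hT hTup (by positivity) hβ_d hinfsupD
    (hsol.darcy m hm) (hTz m hm)
  have hsum : ∑ n ∈ Finset.range N, c₀ / Δt * ‖p (n + 1) - p n‖ ^ 2
      ≤ 1 / k_min * ‖z 0‖ ^ 2 / 2 := by
    linarith [hsol.sum_add_inner_flux_le hA hT hΔt.le le_rfl, hT.inner_nonneg_left (z N),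
      hTup (z 0)]
  have hsup : (Finset.range N).sup' (Finset.nonempty_range_iff.mpr (Nat.one_le_iff_ne_zero.mp hN))
      (fun n => ‖z (n + 1)‖ ^ 2 + ‖p (n + 1)‖ ^ 2 + ⟪A (σ (n + 1)), σ (n + 1)⟫
        + ‖u (n + 1)‖ ^ 2 + ‖γ (n + 1)‖ ^ 2)
      ≤ (k_max / k_min + (1 + κ) / (β_d ^ 2 * k_min ^ 2)) * ‖z 0‖ ^ 2 := by
    refine Finset.sup'_le _ _ fun n hn => ?_
    have hn : n < N := Finset.mem_range.1 hn
    have hmech : ⟪A (σ (n + 1)), σ (n + 1)⟫ + ‖u (n + 1)‖ ^ 2 + ‖γ (n + 1)‖ ^ 2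
        ≤ κ * ‖p n‖ ^ 2 :=
      (hsol.mechanics (n + 1) hn).inner_self_add_sq_norm_add_sq_norm_le hA hAup ha_max.le hβ_e
        hinfsupE hι
    have hpn := mul_le_mul_of_nonneg_left (hp n hn.le) hκ
    calc _ ≤ k_max * (1 / k_min * ‖z 0‖ ^ 2) + 1 / k_min * (1 / k_min * ‖z 0‖ ^ 2) / β_d ^ 2
          + κ * (1 / k_min * (1 / k_min * ‖z 0‖ ^ 2) / β_d ^ 2) := by
          linarith [sq_norm_le_of_inner_self_le hTlow hk_max (hTz (n + 1) hn), hp (n + 1) hn]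
      _ = _ := by ring
  calc _ ≤ 1 / k_min * ‖z 0‖ ^ 2 / 2
        + (k_max / k_min + (1 + κ) / (β_d ^ 2 * k_min ^ 2)) * ‖z 0‖ ^ 2 := add_le_add hsum hsup
    _ = (1 / k_min / 2 + k_max / k_min + (1 + κ) / (β_d ^ 2 * k_min ^ 2)) * ‖z 0‖ ^ 2 := by ring
    _ ≤ _ := mul_le_mul_of_nonneg_left (by linarith [sq_nonneg ‖p 0‖]) (by positivity)

/-- Unconditional stability of the drained split scheme (abstract algebraic form).
The indices follow the convention `p^{-1} := p⁰`, realized via truncated natural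
subtraction: equations (i)–(iv) are stated at levels `n = 0, …, N` with data
`p (n - 1)`, and equation (v) at steps `n = 0, …, N-1`. -/
theorem stmt_5 (α a_max k_min k_max β_e β_d c_ι : ℝ)
    (hα0 : 0 < α) (hα1 : α ≤ 1) (ha_max : 0 < a_max)
    (hk_min : 0 < k_min) (hk : k_min ≤ k_max)
    (hβ_e : 0 < β_e) (hβ_d : 0 < β_d) (hc_ι : 0 < c_ι) :
    ∃ C : ℝ, ∀ (X V Q Z W : Type*)
      [NormedAddCommGroup X] [InnerProductSpace ℝ X]
      [NormedAddCommGroup V] [InnerProductSpace ℝ V]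
      [NormedAddCommGroup Q] [InnerProductSpace ℝ Q]
      [NormedAddCommGroup Z] [InnerProductSpace ℝ Z]
      [NormedAddCommGroup W] [InnerProductSpace ℝ W]
      (A : X →L[ℝ] X) (T : Z →L[ℝ] Z)
      (De : X →ₗ[ℝ] V) (S : X →ₗ[ℝ] Q) (D : Z →ₗ[ℝ] W) (ι : W →ₗ[ℝ] X)
      (c₀ Δt : ℝ) (N : ℕ)
      (σ : ℕ → X) (u : ℕ → V) (γ : ℕ → Q) (z : ℕ → Z) (p : ℕ → W)
      (hAsym : ∀ σ' τ : X, ⟪A σ', τ⟫ = ⟪σ', A τ⟫)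
      (hAlow : ∃ a_min : ℝ, 0 < a_min ∧ ∀ τ : X, a_min * ‖τ‖ ^ 2 ≤ ⟪A τ, τ⟫)
      (hAup : ∀ τ : X, ⟪A τ, τ⟫ ≤ a_max * ‖τ‖ ^ 2)
      (hTsym : ∀ q r : Z, ⟪T q, r⟫ = ⟪q, T r⟫)
      (hTlow : ∀ q : Z, 1 / k_max * ‖q‖ ^ 2 ≤ ⟪T q, q⟫)
      (hTup : ∀ q : Z, ⟪T q, q⟫ ≤ 1 / k_min * ‖q‖ ^ 2)
      (hinfsupE : ∀ (v : V) (ξ : Q), ∃ τ : X,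
        Real.sqrt (‖τ‖ ^ 2 + ‖De τ‖ ^ 2) ≤ 1 ∧
        β_e * (‖v‖ + ‖ξ‖) ≤ ⟪v, De τ⟫ + ⟪ξ, S τ⟫)
      (hinfsupD : ∀ w : W, ∃ q : Z,
        Real.sqrt (‖q‖ ^ 2 + ‖D q‖ ^ 2) ≤ 1 ∧ β_d * ‖w‖ ≤ ⟪D q, w⟫)
      (hι : ∀ w : W, ‖ι w‖ ≤ c_ι * ‖w‖)
      (hc₀ : 0 ≤ c₀) (hΔt : 0 < Δt) (hN : 1 ≤ N)
      (hi : ∀ n : ℕ, n ≤ N → ∀ τ : X,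
        ⟪A (σ n), τ⟫ + ⟪u n, De τ⟫ + ⟪γ n, S τ⟫ = -(α * ⟪A (ι (p (n - 1))), τ⟫))
      (hii : ∀ n : ℕ, n ≤ N → De (σ n) = 0)
      (hiii : ∀ n : ℕ, n ≤ N → S (σ n) = 0)
      (hiv : ∀ n : ℕ, n ≤ N → ∀ q : Z, ⟪T (z n), q⟫ = ⟪p n, D q⟫)
      (hv : ∀ n : ℕ, n < N → ∀ w : W,
        c₀ / Δt * ⟪p (n + 1) - p n, w⟫
          + α ^ 2 / Δt * ⟪A (ι (p (n + 1) - p n)), ι w⟫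
          + ⟪D (z (n + 1)), w⟫
        = -(α / Δt * ⟪A (σ (n + 1) - σ n), ι w⟫)),
      (∑ n ∈ Finset.range N, c₀ / Δt * ‖p (n + 1) - p n‖ ^ 2)
        + ((Finset.range N).sup'
            (Finset.nonempty_range_iff.mpr (Nat.one_le_iff_ne_zero.mp hN))
            fun n => ‖z (n + 1)‖ ^ 2 + ‖p (n + 1)‖ ^ 2
              + ⟪A (σ (n + 1)), σ (n + 1)⟫ + ‖u (n + 1)‖ ^ 2 + ‖γ (n + 1)‖ ^ 2)
      ≤ C * (‖p 0‖ ^ 2 + ‖z 0‖ ^ 2) :=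
  stmt_5_general α a_max k_min k_max β_e β_d c_ι ha_max hk_min hk hβ_e hβ_d
end

section
/- Geometric convergence of GMRES residuals from field-of-values bounds: Let E be a real inner product space, M : E →L[ℝ] E a continuous linear map, and c, b constants with 0 < c ≤ b such that c ‖x‖² ≤ ⟪M x, x⟫ and ‖M x‖ ≤ b ‖x‖ for all x ∈ E. Fix r₀ ∈ E and for each k ∈ ℕ let 𝒦_k = span_ℝ { M^j r₀ : 0 ≤ j < k } be the k-th Krylov subspace and ρ_k = inf { ‖r₀ − M y‖ : y ∈ 𝒦_k } the k-th minimal residual norm. Then ρ_k ≤ (1 − c²/b²)^{k/2} ‖r₀‖ for every k ∈ ℕ. -/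
/-!
Each GMRES residual is at most the residual of one Richardson step `r ↦ r - α M r` from the
previous one, since that step stays in the next Krylov subspace. Choosing `α = ⟪M r, r⟫ / ‖M r‖²`
(projecting `r` onto the line through `M r`) leaves `‖r‖² - ⟪M r, r⟫² / ‖M r‖²`, and the two
field-of-values bounds make the subtracted term at least `(c / b)² ‖r‖²`.
-/

open scoped RealInnerProductSpace

namespace Module.End

variable {R M : Type*} [CommSemiring R] [AddCommMonoid M] [Module R M]

def krylovSubspace (f : Module.End R M) (x : M) (k : ℕ) : Submodule R M :=
  Submodule.span R {v | ∃ j < k, v = (f ^ j) x}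

variable (f : Module.End R M) (x : M)

theorem krylovSubspace_le_succ (k : ℕ) : f.krylovSubspace x k ≤ f.krylovSubspace x (k + 1) :=
  Submodule.span_mono fun _ ⟨j, hj, hv⟩ ↦ ⟨j, hj.trans k.lt_succ_self, hv⟩

theorem self_mem_krylovSubspace_succ (k : ℕ) : x ∈ f.krylovSubspace x (k + 1) :=
  Submodule.subset_span ⟨0, k.succ_pos, (pow_zero f).symm ▸ rfl⟩

theorem apply_mem_krylovSubspace_succ {k : ℕ} {y : M} (hy : y ∈ f.krylovSubspace x k) :
    f y ∈ f.krylovSubspace x (k + 1) := by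
  have : f.krylovSubspace x k ≤ (f.krylovSubspace x (k + 1)).comap f := by
    refine Submodule.span_le.2 ?_
    rintro _ ⟨j, hj, rfl⟩
    exact Submodule.subset_span ⟨j + 1, by omega, by rw [pow_succ', mul_apply]⟩
  exact this hy

end Module.End

section InnerProduct

variable {E : Type*} [NormedAddCommGroup E] [InnerProductSpace ℝ E]

theorem norm_sub_inner_div_smul_sq (r w : E) :
    ‖r - (⟪w, r⟫ / ‖w‖ ^ 2) • w‖ ^ 2 = ‖r‖ ^ 2 - ⟪w, r⟫ ^ 2 / ‖w‖ ^ 2 := by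
  rcases eq_or_ne w 0 with rfl | hw
  · simp
  have : ‖w‖ ≠ 0 := norm_ne_zero_iff.2 hw
  rw [norm_sub_sq_real, real_inner_smul_right, norm_smul, real_inner_comm, Real.norm_eq_abs,
    mul_pow, sq_abs]
  field_simp
  ring

theorem exists_norm_sub_smul_le {c b : ℝ} (hc : 0 < c) {r w : E}
    (hlow : c * ‖r‖ ^ 2 ≤ ⟪w, r⟫) (hup : ‖w‖ ≤ b * ‖r‖) :
    ∃ α : ℝ, ‖r - α • w‖ ≤ √(1 - c ^ 2 / b ^ 2) * ‖r‖ := by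
  rcases eq_or_ne r 0 with rfl | hr
  · exact ⟨0, by simp⟩
  have hr' : 0 < ‖r‖ := norm_pos_iff.2 hr
  have hinner : 0 < ⟪w, r⟫ := lt_of_lt_of_le (by positivity) hlow
  have hw : 0 < ‖w‖ := norm_pos_iff.2 fun h ↦ by simp [h] at hinner
  have hb : 0 < b := pos_of_mul_pos_left (hw.trans_le hup) hr'.le
  refine ⟨⟪w, r⟫ / ‖w‖ ^ 2, ?_⟩
  have hquot : c ^ 2 / b ^ 2 * ‖r‖ ^ 2 ≤ ⟪w, r⟫ ^ 2 / ‖w‖ ^ 2 :=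
    calc c ^ 2 / b ^ 2 * ‖r‖ ^ 2 = (c * ‖r‖ ^ 2) ^ 2 / (b * ‖r‖) ^ 2 := by field_simp
      _ ≤ ⟪w, r⟫ ^ 2 / ‖w‖ ^ 2 := by gcongr
  have hsq : ‖r - (⟪w, r⟫ / ‖w‖ ^ 2) • w‖ ^ 2 ≤ (1 - c ^ 2 / b ^ 2) * ‖r‖ ^ 2 := by
    rw [norm_sub_inner_div_smul_sq]
    linarith
  calc ‖r - (⟪w, r⟫ / ‖w‖ ^ 2) • w‖ = √(‖r - (⟪w, r⟫ / ‖w‖ ^ 2) • w‖ ^ 2) :=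
        (Real.sqrt_sq (norm_nonneg _)).symm
    _ ≤ √((1 - c ^ 2 / b ^ 2) * ‖r‖ ^ 2) := Real.sqrt_le_sqrt hsq
    _ = √(1 - c ^ 2 / b ^ 2) * ‖r‖ := by
      rw [Real.sqrt_mul' _ (by positivity), Real.sqrt_sq hr'.le]

end InnerProduct

theorem exists_mem_krylovSubspace_norm_sub_le {E : Type*} [SeminormedAddCommGroup E]
    [NormedSpace ℝ E] (M : Module.End ℝ E) {q : ℝ} (hq : 0 ≤ q)
    (hstep : ∀ r : E, ∃ α : ℝ, ‖r - α • M r‖ ≤ q * ‖r‖) (r₀ : E) (k : ℕ) :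
    ∃ y ∈ M.krylovSubspace r₀ k, ‖r₀ - M y‖ ≤ q ^ k * ‖r₀‖ := by
  induction k with
  | zero => exact ⟨0, zero_mem _, by simp⟩
  | succ k ih =>
    obtain ⟨y, hy, hres⟩ := ih
    obtain ⟨α, hα⟩ := hstep (r₀ - M y)
    refine ⟨y + α • (r₀ - M y), ?_, ?_⟩
    · exact add_mem (M.krylovSubspace_le_succ r₀ k hy) <| Submodule.smul_mem _ _ <|
        sub_mem (M.self_mem_krylovSubspace_succ r₀ k) (M.apply_mem_krylovSubspace_succ r₀ hy)
    · calc ‖r₀ - M (y + α • (r₀ - M y))‖ = ‖(r₀ - M y) - α • M (r₀ - M y)‖ := by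
            rw [map_add, map_smul, sub_add_eq_sub_sub]
        _ ≤ q * ‖r₀ - M y‖ := hα
        _ ≤ q * (q ^ k * ‖r₀‖) := mul_le_mul_of_nonneg_left hres hq
        _ = q ^ (k + 1) * ‖r₀‖ := by ring

theorem stmt_9_general {E : Type*} [NormedAddCommGroup E] [InnerProductSpace ℝ E]
    (M : E →L[ℝ] E) (c b : ℝ) (hc : 0 < c)
    (hlow : ∀ x : E, c * ‖x‖ ^ 2 ≤ ⟪M x, x⟫)
    (hup : ∀ x : E, ‖M x‖ ≤ b * ‖x‖)
    (r₀ : E) (k : ℕ) :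
    sInf { r : ℝ | ∃ y ∈ Submodule.span ℝ { v : E | ∃ j < k, v = (M ^ j) r₀ },
        r = ‖r₀ - M y‖ }
      ≤ Real.sqrt (1 - c ^ 2 / b ^ 2) ^ k * ‖r₀‖ := by
  obtain ⟨y, hy, hres⟩ := exists_mem_krylovSubspace_norm_sub_le (M : E →ₗ[ℝ] E)
    (Real.sqrt_nonneg _) (fun r ↦ exists_norm_sub_smul_le hc (hlow r) (hup r)) r₀ k
  have hy' : y ∈ Submodule.span ℝ { v : E | ∃ j < k, v = (M ^ j) r₀ } := by
    simpa only [Module.End.krylovSubspace, ← ContinuousLinearMap.toLinearMap_pow,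
      ContinuousLinearMap.coe_coe] using hy
  refine le_trans (csInf_le ⟨0, ?_⟩ ⟨y, hy', rfl⟩) hres
  rintro _ ⟨_, _, rfl⟩
  exact norm_nonneg _

/-- Geometric convergence of GMRES residuals from field-of-values bounds:
if `c‖x‖² ≤ ⟪M x, x⟫` and `‖M x‖ ≤ b‖x‖` for all `x` with `0 < c ≤ b`, then the
`k`-th minimal residual over the Krylov subspace `𝒦_k = span {M^j r₀ : j < k}`
satisfies `ρ_k ≤ (1 - c²/b²)^{k/2} ‖r₀‖`. -/
theorem stmt_9 {E : Type*} [NormedAddCommGroup E] [InnerProductSpace ℝ E]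
    (M : E →L[ℝ] E) (c b : ℝ) (hc : 0 < c) (hcb : c ≤ b)
    (hlow : ∀ x : E, c * ‖x‖ ^ 2 ≤ ⟪M x, x⟫)
    (hup : ∀ x : E, ‖M x‖ ≤ b * ‖x‖)
    (r₀ : E) (k : ℕ) :
    sInf { r : ℝ | ∃ y ∈ Submodule.span ℝ { v : E | ∃ j < k, v = (M ^ j) r₀ },
        r = ‖r₀ - M y‖ }
      ≤ Real.sqrt (1 - c ^ 2 / b ^ 2) ^ k * ‖r₀‖ :=
  stmt_9_general M c b hc hlow hup r₀ k
end
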